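/- Let n ≥ 1, let E be a real normed vector space, let Λ : E → Matrix (Fin n) (Fin n) ℝ be twice continuously differentiable with Λ(x) invertible for all x, and let γ : E → (E →L[ℝ] Matrix (Fin n) (Fin n) ℝ) be continuously differentiable. Define the curvature of a differentiable matrix-valued one-form δ by F(δ)(x)(u,w) := (dδ(x) u)(w) − (dδ(x) w)(u) + ⁅δ(x) u, δ(x) w⁆. Then for all x ∈ E and all u, w ∈ E: F(θ_Λ(γ))(x)(u,w) = Λ(x)⁻¹ * F(γ)(x)(u,w) * Λ(x). In particular, if γ is flat (F(γ) = 0) then θ_Λ(γ) is flat. -/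

import Mathlib

open MeasureTheory

attribute [local instance] Matrix.normedAddCommGroup Matrix.normedSpace

/-- Right multiplication by a fixed matrix, as a continuous linear map. -/
noncomputable def mulR {n : ℕ} (A : Matrix (Fin n) (Fin n) ℝ) :
    Matrix (Fin n) (Fin n) ℝ →L[ℝ] Matrix (Fin n) (Fin n) ℝ :=
  LinearMap.toContinuousLinearMap (LinearMap.mulRight ℝ A)

/-- Left multiplication by a fixed matrix, as a continuous linear map. -/
noncomputable def mulL {n : ℕ} (A : Matrix (Fin n) (Fin n) ℝ) :
    Matrix (Fin n) (Fin n) ℝ →L[ℝ] Matrix (Fin n) (Fin n) ℝ :=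
  LinearMap.toContinuousLinearMap (LinearMap.mulLeft ℝ A)

@[simp] lemma mulL_apply {n : ℕ} (A M : Matrix (Fin n) (Fin n) ℝ) : mulL A M = A * M := rfl
@[simp] lemma mulR_apply {n : ℕ} (A M : Matrix (Fin n) (Fin n) ℝ) : mulR A M = M * A := rfl

/-- `mulL` as a continuous linear map in its argument. -/
noncomputable def mulLC {n : ℕ} :
    Matrix (Fin n) (Fin n) ℝ →L[ℝ] Matrix (Fin n) (Fin n) ℝ →L[ℝ] Matrix (Fin n) (Fin n) ℝ :=
  LinearMap.toContinuousLinearMap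
  { toFun := fun A => mulL A
    map_add' := fun A B => by ext M; simp [add_mul]
    map_smul' := fun c A => by ext M; simp [smul_mul_assoc] }

/-- `mulR` as a continuous linear map in its argument. -/
noncomputable def mulRC {n : ℕ} :
    Matrix (Fin n) (Fin n) ℝ →L[ℝ] Matrix (Fin n) (Fin n) ℝ →L[ℝ] Matrix (Fin n) (Fin n) ℝ :=
  LinearMap.toContinuousLinearMap
  { toFun := fun A => mulR A
    map_add' := fun A B => by ext M; simp [mul_add]
    map_smul' := fun c A => by ext M; simp [mul_smul_comm] }

@[simp] lemma mulLC_apply {n : ℕ} (A : Matrix (Fin n) (Fin n) ℝ) : mulLC A = mulL A := rfl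
@[simp] lemma mulRC_apply {n : ℕ} (A : Matrix (Fin n) (Fin n) ℝ) : mulRC A = mulR A := rfl

lemma hasFDerivAt_matmul {n : ℕ} {E : Type*} [NormedAddCommGroup E] [NormedSpace ℝ E]
    {f g : E → Matrix (Fin n) (Fin n) ℝ} {f' g' : E →L[ℝ] Matrix (Fin n) (Fin n) ℝ} {x : E}
    (hf : HasFDerivAt f f' x) (hg : HasFDerivAt g g' x) :
    HasFDerivAt (fun y => f y * g y)
      ((mulL (f x)).comp g' + (mulR (g x)).comp f') x := by
  letI : NormedAddCommGroup (Matrix (Fin n) (Fin n) ℝ →L[ℝ] Matrix (Fin n) (Fin n) ℝ) :=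
    ContinuousLinearMap.toNormedAddCommGroup
  letI : NormedSpace ℝ (Matrix (Fin n) (Fin n) ℝ →L[ℝ] Matrix (Fin n) (Fin n) ℝ) :=
    ContinuousLinearMap.toNormedSpace
  have h1 : HasFDerivAt (fun y => mulLC (f y)) (mulLC.comp f') x :=
    (mulLC.hasFDerivAt (x := f x)).comp x hf
  have h2 := h1.clm_apply hg
  exact h2.congr_fderiv (by ext v : 1; rfl)

lemma differentiable_entry {n : ℕ} (i j : Fin n) :
    Differentiable ℝ (fun M : Matrix (Fin n) (Fin n) ℝ => M i j) := by
  have h := (differentiable_pi (𝕜 := ℝ)).mp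
    (differentiable_id (𝕜 := ℝ) (E := Matrix (Fin n) (Fin n) ℝ)) i
  exact (differentiable_pi (𝕜 := ℝ)).mp h j

lemma differentiable_det {n : ℕ} :
    Differentiable ℝ (fun M : Matrix (Fin n) (Fin n) ℝ => M.det) := by
  simp only [Matrix.det_apply']
  apply Differentiable.fun_sum
  intro σ _
  apply Differentiable.const_mul
  classical
  have : ∀ s : Finset (Fin n),
      Differentiable ℝ (fun M : Matrix (Fin n) (Fin n) ℝ => ∏ i ∈ s, M (σ i) i) := by
    intro s
    induction s using Finset.induction with
    | empty => simpa using differentiable_const (1 : ℝ)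
    | insert a s h ih =>
        simp only [Finset.prod_insert h]
        exact (differentiable_entry _ _).mul ih
  exact this Finset.univ

lemma differentiableAt_matrix_inv {n : ℕ} {E : Type*} [NormedAddCommGroup E] [NormedSpace ℝ E]
    {f : E → Matrix (Fin n) (Fin n) ℝ} {x : E}
    (hf : DifferentiableAt ℝ f x) (h : IsUnit (f x)) :
    DifferentiableAt ℝ (fun y => (f y)⁻¹) x := by
  classical
  have hdet : (f x).det ≠ 0 := ((Matrix.isUnit_iff_isUnit_det _).mp h).ne_zero
  have hrw : (fun y => (f y)⁻¹) = fun y => ((f y).det)⁻¹ • (f y).adjugate := by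
    funext y
    rw [Matrix.inv_def, Ring.inverse_eq_inv]
  rw [hrw]
  apply DifferentiableAt.fun_smul
  · exact (differentiable_det.differentiableAt.comp x hf).inv hdet
  · refine differentiableAt_pi.mpr ?_
    intro i
    rw [differentiableAt_pi]
    intro j
    have hup : DifferentiableAt ℝ (fun y => (f y).updateRow j (Pi.single i 1)) x := by
      refine differentiableAt_pi.mpr ?_
      intro k
      rw [differentiableAt_pi]
      intro l
      simp only [Matrix.updateRow_apply]
      by_cases hk : k = j
      · simp [hk]
      · simp only [hk, if_false]
        exact ((differentiable_entry k l).differentiableAt).comp x hf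
    have := (differentiable_det.differentiableAt).comp x hup
    simpa [Matrix.adjugate_apply, Function.comp_def] using this

/-- The curvature `F(δ)(x)(u,w) = (dδ(x) u)(w) − (dδ(x) w)(u) + ⁅δ(x) u, δ(x) w⁆` of a
matrix-valued one-form. -/
noncomputable def curvF {n : ℕ} {E : Type*} [NormedAddCommGroup E] [NormedSpace ℝ E]
    (δ : E → (E →L[ℝ] Matrix (Fin n) (Fin n) ℝ)) (x u w : E) :
    Matrix (Fin n) (Fin n) ℝ :=
  (fderiv ℝ δ x u) w - (fderiv ℝ δ x w) u + ⁅δ x u, δ x w⁆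

set_option maxHeartbeats 1600000 in
/-- Equivariance of the curvature under the affine gauge action
`θ_Λ(γ) = Λ⁻¹γΛ + Λ⁻¹dΛ`: `F(θ_Λ(γ)) = Λ⁻¹ F(γ) Λ`; in particular, if `γ` is flat then
`θ_Λ(γ)` is flat. -/
theorem curvature_equivariance
    {n : ℕ} (hn : 1 ≤ n)
    {E : Type*} [NormedAddCommGroup E] [NormedSpace ℝ E]
    (Λ : E → Matrix (Fin n) (Fin n) ℝ)
    (hΛ : ContDiff ℝ 2 Λ) (hinv : ∀ x, IsUnit (Λ x))
    (γ : E → (E →L[ℝ] Matrix (Fin n) (Fin n) ℝ))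
    (hγ : letI : NormedAddCommGroup (E →L[ℝ] Matrix (Fin n) (Fin n) ℝ) :=
        ContinuousLinearMap.toNormedAddCommGroup
      letI : NormedSpace ℝ (E →L[ℝ] Matrix (Fin n) (Fin n) ℝ) := ContinuousLinearMap.toNormedSpace
      ContDiff ℝ 1 γ)
    (θ : E → (E →L[ℝ] Matrix (Fin n) (Fin n) ℝ))
    (hθ : ∀ x, θ x =
      (mulR (Λ x)).comp ((mulL ((Λ x)⁻¹)).comp (γ x))
        + (mulL ((Λ x)⁻¹)).comp (fderiv ℝ Λ x)) :
    (∀ (x u w : E), curvF θ x u w = (Λ x)⁻¹ * curvF γ x u w * Λ x)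
    ∧ ((∀ (x u w : E), curvF γ x u w = 0) → ∀ (x u w : E), curvF θ x u w = 0) := by
  have main : ∀ (x u w : E), curvF θ x u w = (Λ x)⁻¹ * curvF γ x u w * Λ x := by
    intro x u w
    classical
    letI : NormedAddCommGroup (E →L[ℝ] Matrix (Fin n) (Fin n) ℝ) :=
      ContinuousLinearMap.toNormedAddCommGroup
    letI : NormedSpace ℝ (E →L[ℝ] Matrix (Fin n) (Fin n) ℝ) := ContinuousLinearMap.toNormedSpace
    letI : NormedAddCommGroup (Matrix (Fin n) (Fin n) ℝ →L[ℝ] Matrix (Fin n) (Fin n) ℝ) :=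
      ContinuousLinearMap.toNormedAddCommGroup
    letI : NormedSpace ℝ (Matrix (Fin n) (Fin n) ℝ →L[ℝ] Matrix (Fin n) (Fin n) ℝ) :=
      ContinuousLinearMap.toNormedSpace
    have hΛdiff : Differentiable ℝ Λ := hΛ.differentiable (by norm_num)
    have hΛx : HasFDerivAt Λ (fderiv ℝ Λ x) x := hΛdiff.differentiableAt.hasFDerivAt
    set L := fderiv ℝ Λ x with hL
    have hγx : HasFDerivAt γ (fderiv ℝ γ x) x :=
      ((hγ.differentiable (by norm_num)).differentiableAt).hasFDerivAt
    set Γ' := fderiv ℝ γ x with hΓ'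
    have hDc : ContDiff ℝ 1 (fderiv ℝ Λ) := hΛ.fderiv_right (by norm_num)
    have hDx : HasFDerivAt (fderiv ℝ Λ) (fderiv ℝ (fderiv ℝ Λ) x) x :=
      ((hDc.differentiable (by norm_num)).differentiableAt).hasFDerivAt
    set H := fderiv ℝ (fderiv ℝ Λ) x with hH
    have hHsymm : ∀ v z : E, H v z = H z v := fun v z =>
      second_derivative_symmetric (fun y => (hΛdiff y).hasFDerivAt) hDx v z
    have hdet : IsUnit (Λ x).det := (Matrix.isUnit_iff_isUnit_det _).mp (hinv x)
    set A0 := (Λ x)⁻¹ with hA0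
    have h1 : Λ x * A0 = 1 := Matrix.mul_nonsing_inv _ hdet
    have h2 : A0 * Λ x = 1 := Matrix.nonsing_inv_mul _ hdet
    have hA : HasFDerivAt (fun z => (Λ z)⁻¹) (fderiv ℝ (fun z => (Λ z)⁻¹) x) x :=
      (differentiableAt_matrix_inv hΛdiff.differentiableAt (hinv x)).hasFDerivAt
    set A' := fderiv ℝ (fun z => (Λ z)⁻¹) x with hA'
    have hA'formula : ∀ v, A' v = -(A0 * (L v) * A0) := by
      intro v
      have hprod : HasFDerivAt (fun y => Λ y * (Λ y)⁻¹)
          ((mulL (Λ x)).comp A' + (mulR A0).comp L) x := hasFDerivAt_matmul hΛx hA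
      have hconst : (fun y => Λ y * (Λ y)⁻¹) = fun _ => (1 : Matrix (Fin n) (Fin n) ℝ) :=
        funext fun y => Matrix.mul_nonsing_inv _ ((Matrix.isUnit_iff_isUnit_det _).mp (hinv y))
      rw [hconst] at hprod
      have h0 : ((mulL (Λ x)).comp A' + (mulR A0).comp L) = 0 :=
        hprod.unique (hasFDerivAt_const _ _)
      have h0v : Λ x * A' v + L v * A0 = 0 := by
        have := ContinuousLinearMap.ext_iff.mp h0 v
        simpa using this
      have hx : Λ x * A' v = -(L v * A0) := by
        rw [eq_neg_of_add_eq_zero_left h0v]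
      calc A' v = (A0 * Λ x) * A' v := by rw [h2, one_mul]
        _ = A0 * (Λ x * A' v) := by rw [mul_assoc]
        _ = A0 * (-(L v * A0)) := by rw [hx]
        _ = -(A0 * (L v) * A0) := by rw [mul_neg, mul_assoc]
    have hθeq : θ = fun y => (mulR (Λ y)).comp ((mulL ((Λ y)⁻¹)).comp (γ y))
        + (mulL ((Λ y)⁻¹)).comp (fderiv ℝ Λ y) := funext hθ
    have hmR : HasFDerivAt (fun y => mulR (Λ y)) (mulRC.comp L) x :=
      (mulRC.hasFDerivAt (x := Λ x)).comp x hΛx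
    have hmL : HasFDerivAt (fun y => mulL ((Λ y)⁻¹)) (mulLC.comp A') x :=
      by have h := (mulLC.hasFDerivAt (x := A0)).comp x hA; exact h
    have hin : HasFDerivAt (fun y => (mulL ((Λ y)⁻¹)).comp (γ y))
        ((ContinuousLinearMap.compL ℝ E (Matrix (Fin n) (Fin n) ℝ) (Matrix (Fin n) (Fin n) ℝ)
            (mulL A0)).comp Γ'
          + ((ContinuousLinearMap.compL ℝ E (Matrix (Fin n) (Fin n) ℝ)
              (Matrix (Fin n) (Fin n) ℝ)).flip (γ x)).comp (mulLC.comp A')) x :=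
      HasFDerivAt.clm_comp hmL hγx
    have hin2 : HasFDerivAt (fun y => (mulL ((Λ y)⁻¹)).comp (fderiv ℝ Λ y))
        ((ContinuousLinearMap.compL ℝ E (Matrix (Fin n) (Fin n) ℝ) (Matrix (Fin n) (Fin n) ℝ)
            (mulL A0)).comp H
          + ((ContinuousLinearMap.compL ℝ E (Matrix (Fin n) (Fin n) ℝ)
              (Matrix (Fin n) (Fin n) ℝ)).flip (fderiv ℝ Λ x)).comp (mulLC.comp A')) x :=
      HasFDerivAt.clm_comp hmL hDx
    have hout : HasFDerivAt (fun y => (mulR (Λ y)).comp ((mulL ((Λ y)⁻¹)).comp (γ y)))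
        ((ContinuousLinearMap.compL ℝ E (Matrix (Fin n) (Fin n) ℝ) (Matrix (Fin n) (Fin n) ℝ)
            (mulR (Λ x))).comp
            ((ContinuousLinearMap.compL ℝ E (Matrix (Fin n) (Fin n) ℝ) (Matrix (Fin n) (Fin n) ℝ)
              (mulL A0)).comp Γ'
            + ((ContinuousLinearMap.compL ℝ E (Matrix (Fin n) (Fin n) ℝ)
                (Matrix (Fin n) (Fin n) ℝ)).flip (γ x)).comp (mulLC.comp A'))
          + ((ContinuousLinearMap.compL ℝ E (Matrix (Fin n) (Fin n) ℝ)
              (Matrix (Fin n) (Fin n) ℝ)).flip ((mulL A0).comp (γ x))).comp (mulRC.comp L)) x :=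
      HasFDerivAt.clm_comp hmR hin
    have hθd : HasFDerivAt θ
        (((ContinuousLinearMap.compL ℝ E (Matrix (Fin n) (Fin n) ℝ) (Matrix (Fin n) (Fin n) ℝ)
            (mulR (Λ x))).comp
            ((ContinuousLinearMap.compL ℝ E (Matrix (Fin n) (Fin n) ℝ) (Matrix (Fin n) (Fin n) ℝ)
              (mulL A0)).comp Γ'
            + ((ContinuousLinearMap.compL ℝ E (Matrix (Fin n) (Fin n) ℝ)
                (Matrix (Fin n) (Fin n) ℝ)).flip (γ x)).comp (mulLC.comp A'))
          + ((ContinuousLinearMap.compL ℝ E (Matrix (Fin n) (Fin n) ℝ)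
              (Matrix (Fin n) (Fin n) ℝ)).flip ((mulL A0).comp (γ x))).comp (mulRC.comp L))
          + ((ContinuousLinearMap.compL ℝ E (Matrix (Fin n) (Fin n) ℝ) (Matrix (Fin n) (Fin n) ℝ)
              (mulL A0)).comp H
            + ((ContinuousLinearMap.compL ℝ E (Matrix (Fin n) (Fin n) ℝ)
                (Matrix (Fin n) (Fin n) ℝ)).flip (fderiv ℝ Λ x)).comp (mulLC.comp A'))) x := by
      rw [hθeq]
      exact hout.add hin2
    have hθfd := @HasFDerivAt.fderiv _ _ _ _ _ _ _ _ _ _ _ _ _ _ _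
      (by exact (SeminormedAddCommGroup.toIsTopologicalAddGroup
        (E := E →L[ℝ] Matrix (Fin n) (Fin n) ℝ)).toContinuousAdd)
      (by exact (inferInstance : ContinuousSMul ℝ (E →L[ℝ] Matrix (Fin n) (Fin n) ℝ)))
      (by exact (inferInstance : T2Space (E →L[ℝ] Matrix (Fin n) (Fin n) ℝ))) hθd
    have hval : ∀ v z, fderiv ℝ θ x v z = (A0 * Γ' v z + A' v * γ x z) * Λ x
        + A0 * γ x z * L v + (A0 * H v z + A' v * L z) := by
      intro v z
      erw [hθfd]
      rfl
    have hθv : ∀ v, θ x v = A0 * γ x v * Λ x + A0 * L v := by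
      intro v
      rw [hθ x]
      rfl
    rw [curvF, curvF]
    change fderiv ℝ θ x u w - fderiv ℝ θ x w u + ⁅θ x u, θ x w⁆
      = A0 * (Γ' u w - Γ' w u + ⁅γ x u, γ x w⁆) * Λ x
    rw [hval u w, hval w u, hθv u, hθv w]
    simp only [hA'formula]
    rw [Ring.lie_def, Ring.lie_def]
    rw [hHsymm w u]
    have hre : ∀ z : Matrix (Fin n) (Fin n) ℝ, Λ x * (A0 * z) = z := by
      intro z
      rw [← mul_assoc, h1, one_mul]
    simp only [mul_add, add_mul, neg_mul, mul_neg, mul_assoc, hre, h1]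
    noncomm_ring
  exact ⟨main, fun hflat x u w => by rw [main x u w, hflat x u w, Matrix.mul_zero, Matrix.zero_mul]⟩
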